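/- Let n ≥ 1, let A be a finite-dimensional complex inner product space, let a₀ ∈ A be a unit vector, let (φ_i)_{i∈[n]} be an orthonormal family in A, and let p be a probability distribution on [n]. Suppose U_p is a unitary on A ⊗ ℂⁿ with U_p(a₀ ⊗ e₁) = Σ_i √(p_i) (φ_i ⊗ e_i), and U_copy is a unitary on ℂⁿ ⊗ ℂⁿ with U_copy(e_i ⊗ e₁) = e_i ⊗ e_i for all i. Let Ũ_p := (U_p† ⊗ I)(I ⊗ U_copy)(U_p ⊗ I), and let Π be the orthogonal projection of A ⊗ ℂⁿ ⊗ ℂⁿ onto the subspace (ℂ·a₀) ⊗ (ℂ·e₁) ⊗ ℂⁿ. Then Π(Ũ_p(a₀ ⊗ e₁ ⊗ e₁)) = Σ_{i∈[n]} p_i · (a₀ ⊗ e₁ ⊗ e_i); equivalently, Ũ_p(a₀ ⊗ e₁ ⊗ e₁) = Σ_i p_i (a₀ ⊗ e₁ ⊗ e_i) + w for some vector w with Π w = 0. -/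

import Mathlib

open scoped ComplexInnerProductSpace

/-!
Linearity gives `Ũ_p (a₀ ⊗ e₁ ⊗ e₁) = ∑ i, √(p i) • U_p† (φ i ⊗ e i) ⊗ e i`. The vectors
`a₀ ⊗ e₁ ⊗ e k` are orthonormal, so `Π` sends a vector `v` to `∑ k, ⟪a₀ ⊗ e₁ ⊗ e k, v⟫ • (a₀ ⊗ e₁ ⊗ e k)`,
and the `k`-th coefficient is `√(p k) ⟪a₀ ⊗ e₁, U_p† (φ k ⊗ e k)⟫ = √(p k) ⟪U_p (a₀ ⊗ e₁), φ k ⊗ e k⟫ = p k`.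
-/

/-- The tensor product of two vectors of Euclidean spaces, realized concretely:
`(tp f g) (a, b) = f a * g b`.  This realizes `EuclideanSpace ℂ (α × β)` as the
tensor product `EuclideanSpace ℂ α ⊗ EuclideanSpace ℂ β` with the induced inner
product `⟪u₁ ⊗ v₁, u₂ ⊗ v₂⟫ = ⟪u₁, u₂⟫ ⟪v₁, v₂⟫`. -/
noncomputable def tp {α β : Type*} (f : EuclideanSpace ℂ α) (g : EuclideanSpace ℂ β) :
    EuclideanSpace ℂ (α × β) := WithLp.toLp 2 (fun x => f x.1 * g x.2)

/-- Tensor of a vector of `EuclideanSpace ℂ α` with a vector of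
`EuclideanSpace ℂ (β × γ)`, placed in `EuclideanSpace ℂ ((α × β) × γ)`. -/
noncomputable def tpL {α β γ : Type*} (a : EuclideanSpace ℂ α) (z : EuclideanSpace ℂ (β × γ)) :
    EuclideanSpace ℂ ((α × β) × γ) := WithLp.toLp 2 (fun x => a x.1.1 * z (x.1.2, x.2))

/-- The standard orthonormal basis vector `e_i` of `ℂⁿ`. -/
noncomputable def eb {n : ℕ} (i : Fin n) : EuclideanSpace ℂ (Fin n) :=
  EuclideanSpace.single i 1

section OrthogonalProjection

variable {𝕜 E : Type*} [RCLike 𝕜] [NormedAddCommGroup E] [InnerProductSpace 𝕜 E]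

open scoped InnerProductSpace in
theorem Orthonormal.orthogonalProjectionOnto_span_range_apply {κ : Type*} [Fintype κ]
    {b : κ → E} [(Submodule.span 𝕜 (Set.range b)).HasOrthogonalProjection] (hb : Orthonormal 𝕜 b)
    (x : E) :
    ((Submodule.span 𝕜 (Set.range b)).orthogonalProjectionOnto x : E) =
      ∑ k, ⟪b k, x⟫_𝕜 • b k := by
  rw [Submodule.coe_orthogonalProjectionOnto_apply]
  refine Submodule.eq_starProjection_of_mem_of_inner_eq_zero
    (Submodule.sum_mem _ fun k _ => Submodule.smul_mem _ _ (Submodule.subset_span ⟨k, rfl⟩))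
    fun w hw => ?_
  suffices Submodule.span 𝕜 (Set.range b) ≤ (𝕜 ∙ (x - ∑ k, ⟪b k, x⟫_𝕜 • b k))ᗮ from
    Submodule.mem_orthogonal_singleton_iff_inner_right.1 (this hw)
  refine Submodule.span_le.2 (Set.range_subset_iff.2 fun k => ?_)
  rw [SetLike.mem_coe, Submodule.mem_orthogonal_singleton_iff_inner_right, inner_sub_left,
    hb.inner_left_fintype, inner_conj_symm, sub_self]

end OrthogonalProjection

section TensorProduct

variable {α β γ : Type*}

theorem tp_inner [Fintype α] [Fintype β] (f f' : EuclideanSpace ℂ α) (g g' : EuclideanSpace ℂ β) :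
    ⟪tp f g, tp f' g'⟫ = ⟪f, f'⟫ * ⟪g, g'⟫ := by
  simp only [tp, PiLp.inner_apply, RCLike.inner_apply, Fintype.sum_prod_type,
    map_mul, Finset.sum_mul_sum]
  exact Finset.sum_congr rfl fun _ _ => Finset.sum_congr rfl fun _ _ => by ring

theorem norm_tp [Fintype α] [Fintype β] (f : EuclideanSpace ℂ α) (g : EuclideanSpace ℂ β) :
    ‖tp f g‖ = ‖f‖ * ‖g‖ := by
  rw [EuclideanSpace.norm_eq, EuclideanSpace.norm_eq, EuclideanSpace.norm_eq,
    ← Real.sqrt_mul (by positivity), Finset.sum_mul_sum, Fintype.sum_prod_type]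
  simp [tp, mul_pow]

theorem tp_sum_left {κ : Type*} (s : Finset κ) (f : κ → EuclideanSpace ℂ α)
    (g : EuclideanSpace ℂ β) : tp (∑ i ∈ s, f i) g = ∑ i ∈ s, tp (f i) g := by
  ext x
  simp [tp, WithLp.ofLp_sum, Finset.sum_mul]

theorem tp_smul_left (c : ℂ) (f : EuclideanSpace ℂ α) (g : EuclideanSpace ℂ β) :
    tp (c • f) g = c • tp f g := by
  ext x
  simp [tp, mul_assoc]

theorem tp_tp_eq_tpL (a : EuclideanSpace ℂ α) (b : EuclideanSpace ℂ β) (c : EuclideanSpace ℂ γ) :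
    tp (tp a b) c = tpL a (tp b c) := by
  ext x
  simp [tp, tpL, mul_assoc]

variable [Fintype α] [Fintype β] {κ : Type*} {u : κ → EuclideanSpace ℂ α}
  {v : κ → EuclideanSpace ℂ β}

theorem Orthonormal.tp_left (hu : Orthonormal ℂ u) (hv : ∀ k, ‖v k‖ = 1) :
    Orthonormal ℂ fun k => tp (u k) (v k) :=
  ⟨fun k => by rw [norm_tp, hu.1, hv, one_mul],
    fun _ _ hij => (tp_inner _ _ _ _).trans (by rw [hu.2 hij, zero_mul])⟩

theorem Orthonormal.tp_right (hu : ∀ k, ‖u k‖ = 1) (hv : Orthonormal ℂ v) :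
    Orthonormal ℂ fun k => tp (u k) (v k) :=
  ⟨fun k => by rw [norm_tp, hu, hv.1, one_mul],
    fun _ _ hij => (tp_inner _ _ _ _).trans (by rw [hv.2 hij, mul_zero])⟩

end TensorProduct

theorem orthonormal_eb (n : ℕ) : Orthonormal ℂ (eb (n := n)) :=
  EuclideanSpace.orthonormal_single

theorem stmt1_general {n : ℕ} (hn : 1 ≤ n) {ι : Type*} [Fintype ι]
    (a₀ : EuclideanSpace ℂ ι) (ha₀ : ‖a₀‖ = 1)
    (φ : Fin n → EuclideanSpace ℂ ι) (hφ : Orthonormal ℂ φ)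
    (p : Fin n → ℝ) (hp0 : ∀ i, 0 ≤ p i)
    (e₁ : EuclideanSpace ℂ (Fin n)) (he₁ : e₁ = eb ⟨0, hn⟩)
    (Up : EuclideanSpace ℂ (ι × Fin n) ≃ₗᵢ[ℂ] EuclideanSpace ℂ (ι × Fin n))
    (hUp : Up (tp a₀ e₁) = ∑ i, (Real.sqrt (p i) : ℂ) • tp (φ i) (eb i))
    (Ucopy : EuclideanSpace ℂ (Fin n × Fin n) ≃ₗᵢ[ℂ] EuclideanSpace ℂ (Fin n × Fin n))
    (hUcopy : ∀ i : Fin n, Ucopy (tp (eb i) e₁) = tp (eb i) (eb i))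
    -- `UpI = U_p ⊗ I` on `A ⊗ ℂⁿ ⊗ ℂⁿ`:
    (UpI : EuclideanSpace ℂ ((ι × Fin n) × Fin n) ≃ₗᵢ[ℂ] EuclideanSpace ℂ ((ι × Fin n) × Fin n))
    (hUpI : ∀ (z : EuclideanSpace ℂ (ι × Fin n)) (c : EuclideanSpace ℂ (Fin n)),
      UpI (tp z c) = tp (Up z) c)
    -- `IUcopy = I ⊗ U_copy` on `A ⊗ ℂⁿ ⊗ ℂⁿ`:
    (IUcopy : EuclideanSpace ℂ ((ι × Fin n) × Fin n) ≃ₗᵢ[ℂ] EuclideanSpace ℂ ((ι × Fin n) × Fin n))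
    (hIUcopy : ∀ (a : EuclideanSpace ℂ ι) (z : EuclideanSpace ℂ (Fin n × Fin n)),
      IUcopy (tpL a z) = tpL a (Ucopy z))
    -- `UpdI = U_p† ⊗ I` on `A ⊗ ℂⁿ ⊗ ℂⁿ`:
    (UpdI : EuclideanSpace ℂ ((ι × Fin n) × Fin n) ≃ₗᵢ[ℂ] EuclideanSpace ℂ ((ι × Fin n) × Fin n))
    (hUpdI : ∀ (z : EuclideanSpace ℂ (ι × Fin n)) (c : EuclideanSpace ℂ (Fin n)),
      UpdI (tp z c) = tp (Up.symm z) c) :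
    -- `Π` is the orthogonal projection onto `(ℂ·a₀) ⊗ (ℂ·e₁) ⊗ ℂⁿ`, i.e. onto the span of
    -- the orthonormal family `(a₀ ⊗ e₁ ⊗ e_k)_{k ∈ [n]}`:
    (Submodule.orthogonalProjectionOnto
        (Submodule.span ℂ (Set.range fun k : Fin n => tp (tp a₀ e₁) (eb k)))
        (UpdI (IUcopy (UpI (tp (tp a₀ e₁) e₁)))) :
      EuclideanSpace ℂ ((ι × Fin n) × Fin n))
      = ∑ i, (p i : ℂ) • tp (tp a₀ e₁) (eb i) := by
  set ψ := fun i => tp (φ i) (eb i)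
  have hψ : Orthonormal ℂ ψ := hφ.tp_left (orthonormal_eb n).1
  have hbasis : Orthonormal ℂ fun k => tp (tp a₀ e₁) (eb k) :=
    Orthonormal.tp_right (fun _ => by rw [norm_tp, ha₀, he₁, (orthonormal_eb n).1, one_mul])
      (orthonormal_eb n)
  have hout : UpdI (IUcopy (UpI (tp (tp a₀ e₁) e₁))) =
      ∑ i, (√(p i) : ℂ) • tp (Up.symm (ψ i)) (eb i) := by
    rw [hUpI, hUp, tp_sum_left, map_sum, map_sum]
    refine Finset.sum_congr rfl fun i _ => ?_
    rw [tp_smul_left, map_smul, tp_tp_eq_tpL, hIUcopy, hUcopy, ← tp_tp_eq_tpL, map_smul, hUpdI]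
  have hoverlap : ∀ k, ⟪tp a₀ e₁, Up.symm (ψ k)⟫ = √(p k) := fun k => by
    rw [← LinearIsometryEquiv.inner_map_eq_flip, hUp, hψ.inner_left_fintype, Complex.conj_ofReal]
  rw [hbasis.orthogonalProjectionOnto_span_range_apply, hout]
  refine Finset.sum_congr rfl fun k _ => congrArg (· • _) ?_
  simp only [inner_sum, inner_smul_right, tp_inner, hoverlap,
    orthonormal_iff_ite.1 (orthonormal_eb n), mul_ite, mul_one, mul_zero, Finset.sum_ite_eq, Finset.mem_univ, if_true]
  rw [← Complex.ofReal_mul, Real.mul_self_sqrt (hp0 k)]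

/-- Let `n ≥ 1`, let `A` be a finite-dimensional complex inner product
space (realized as `EuclideanSpace ℂ ι`), `a₀ ∈ A` a unit vector, `(φ i)` an orthonormal
family in `A`, and `p` a probability distribution on `[n]`.  Let `U_p` be a unitary on
`A ⊗ ℂⁿ` with `U_p (a₀ ⊗ e₁) = ∑ i, √(p i) • (φ i ⊗ e i)`, and `U_copy` a unitary on
`ℂⁿ ⊗ ℂⁿ` with `U_copy (e i ⊗ e₁) = e i ⊗ e i`.  Let `UpI = U_p ⊗ I`, `IUcopy = I ⊗ U_copy`
and `UpdI = U_p† ⊗ I` (the adjoint of a unitary being its inverse `Up.symm`), so that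
`Ũ_p = UpdI ∘ IUcopy ∘ UpI`.  Let `Π` be the orthogonal projection
of `A ⊗ ℂⁿ ⊗ ℂⁿ` onto `(ℂ·a₀) ⊗ (ℂ·e₁) ⊗ ℂⁿ`, the span of the orthonormal family
`(a₀ ⊗ e₁ ⊗ e_k)_k`.  Then `Π (Ũ_p (a₀ ⊗ e₁ ⊗ e₁)) = ∑ i, p i • (a₀ ⊗ e₁ ⊗ e_i)`. -/
theorem stmt1 {n : ℕ} (hn : 1 ≤ n) {ι : Type*} [Fintype ι] [DecidableEq ι]
    (a₀ : EuclideanSpace ℂ ι) (ha₀ : ‖a₀‖ = 1)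
    (φ : Fin n → EuclideanSpace ℂ ι) (hφ : Orthonormal ℂ φ)
    (p : Fin n → ℝ) (hp0 : ∀ i, 0 ≤ p i) (hp1 : ∑ i, p i = 1)
    (e₁ : EuclideanSpace ℂ (Fin n)) (he₁ : e₁ = eb ⟨0, hn⟩)
    (Up : EuclideanSpace ℂ (ι × Fin n) ≃ₗᵢ[ℂ] EuclideanSpace ℂ (ι × Fin n))
    (hUp : Up (tp a₀ e₁) = ∑ i, (Real.sqrt (p i) : ℂ) • tp (φ i) (eb i))
    (Ucopy : EuclideanSpace ℂ (Fin n × Fin n) ≃ₗᵢ[ℂ] EuclideanSpace ℂ (Fin n × Fin n))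
    (hUcopy : ∀ i : Fin n, Ucopy (tp (eb i) e₁) = tp (eb i) (eb i))
    -- `UpI = U_p ⊗ I` on `A ⊗ ℂⁿ ⊗ ℂⁿ`:
    (UpI : EuclideanSpace ℂ ((ι × Fin n) × Fin n) ≃ₗᵢ[ℂ] EuclideanSpace ℂ ((ι × Fin n) × Fin n))
    (hUpI : ∀ (z : EuclideanSpace ℂ (ι × Fin n)) (c : EuclideanSpace ℂ (Fin n)),
      UpI (tp z c) = tp (Up z) c)
    -- `IUcopy = I ⊗ U_copy` on `A ⊗ ℂⁿ ⊗ ℂⁿ`: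
    (IUcopy : EuclideanSpace ℂ ((ι × Fin n) × Fin n) ≃ₗᵢ[ℂ] EuclideanSpace ℂ ((ι × Fin n) × Fin n))
    (hIUcopy : ∀ (a : EuclideanSpace ℂ ι) (z : EuclideanSpace ℂ (Fin n × Fin n)),
      IUcopy (tpL a z) = tpL a (Ucopy z))
    -- `UpdI = U_p† ⊗ I` on `A ⊗ ℂⁿ ⊗ ℂⁿ`:
    (UpdI : EuclideanSpace ℂ ((ι × Fin n) × Fin n) ≃ₗᵢ[ℂ] EuclideanSpace ℂ ((ι × Fin n) × Fin n))
    (hUpdI : ∀ (z : EuclideanSpace ℂ (ι × Fin n)) (c : EuclideanSpace ℂ (Fin n)),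
      UpdI (tp z c) = tp (Up.symm z) c) :
    -- `Π` is the orthogonal projection onto `(ℂ·a₀) ⊗ (ℂ·e₁) ⊗ ℂⁿ`, i.e. onto the span of
    -- the orthonormal family `(a₀ ⊗ e₁ ⊗ e_k)_{k ∈ [n]}`:
    (Submodule.orthogonalProjectionOnto
        (Submodule.span ℂ (Set.range fun k : Fin n => tp (tp a₀ e₁) (eb k)))
        (UpdI (IUcopy (UpI (tp (tp a₀ e₁) e₁)))) :
      EuclideanSpace ℂ ((ι × Fin n) × Fin n))
      = ∑ i, (p i : ℂ) • tp (tp a₀ e₁) (eb i) :=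
  stmt1_general hn a₀ ha₀ φ hφ p hp0 e₁ he₁ Up hUp Ucopy hUcopy UpI hUpI IUcopy hIUcopy UpdI hUpdI
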